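/- arXiv:1112.3589 — 3 statements merged into one kernel-verified Lean document; each statement's English description precedes it below -/
import Mathlib

section
/- If λ>1, then the basin of attraction of the fixed point (0,0,ξ₀) of T_λ equals the open upper half-space: A((0,0,ξ₀)) = {(x,y,z)∈ℝ³ : z>0}. -/
noncomputable section

open Real Filter Topology Set MeasureTheory
open scoped Classical OnePoint

abbrev R3 := EuclideanSpace ℝ (Fin 3)

/-- The point (x,y,z) ∈ ℝ³. -/
def mk3 (x y z : ℝ) : R3 := (EuclideanSpace.equiv (Fin 3) ℝ).symm ![x, y, z]

/-- M(x,y) = max(|x|,|y|). -/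
def Mxy (x y : ℝ) : ℝ := max |x| |y|

/-- The map T₀ on the beam X = [−π/4,π/4]² × ℝ. -/
def T0 (x y z : ℝ) : R3 :=
  if x = 0 ∧ y = 0 then mk3 0 0 (Real.tanh z)
  else
    mk3 (x * Real.cos (Mxy x y) * Real.sin (Mxy x y) /
          (Real.sqrt (x ^ 2 + y ^ 2) * (Real.cos (Mxy x y) ^ 2 + Real.sinh z ^ 2)))
        (y * Real.cos (Mxy x y) * Real.sin (Mxy x y) /
          (Real.sqrt (x ^ 2 + y ^ 2) * (Real.cos (Mxy x y) ^ 2 + Real.sinh z ^ 2)))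
        (Real.sinh z * Real.cosh z / (Real.cos (Mxy x y) ^ 2 + Real.sinh z ^ 2))

/-- j(t) = ⌊(t+π/4)/(π/2)⌋. -/
def jfold (t : ℝ) : ℤ := ⌊(t + Real.pi / 4) / (Real.pi / 2)⌋

/-- t̂ = (−1)^{j(t)}·(t − j(t)·π/2), the folding of ℝ onto [−π/4,π/4] by reflections. -/
def fold (t : ℝ) : ℝ := (-1 : ℝ) ^ jfold t * (t - jfold t * (Real.pi / 2))

/-- The generalized tangent map T : ℝ³ → ℝ³ ∪ {∞} (one-point compactification). -/
def Tmap (v : R3) : OnePoint R3 :=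
  let w := T0 (fold (v 0)) (fold (v 1)) (v 2)
  if Even (jfold (v 0) + jfold (v 1)) then (w : OnePoint R3)
  else if w = 0 then ∞ else (((‖w‖ ^ 2)⁻¹ • w : R3) : OnePoint R3)

/-- T_λ = λ·T, with λ·∞ = ∞. -/
def Tl (l : ℝ) (v : R3) : OnePoint R3 := Option.map (fun w => l • w) (Tmap v)

/-- The extension of T_λ to ℝ³ ∪ {∞} sending ∞ ↦ ∞, so that iterates are defined;
`(TlHat l)^[k] ↑x ≠ ∞` says the orbit of x has not hit ∞ within the first k steps. -/
def TlHat (l : ℝ) (p : OnePoint R3) : OnePoint R3 := Option.bind p (Tl l)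

/-- The basin of attraction A(x₀) of a fixed point x₀ of T_λ: points whose orbit is
defined for all time and converges to x₀. -/
def basin (l : ℝ) (x0 : R3) : Set R3 :=
  {x | (∀ k : ℕ, (TlHat l)^[k] ↑x ≠ ∞) ∧
    ∀ ε > (0 : ℝ), ∃ N : ℕ, ∀ k ≥ N, ∀ w : R3, (TlHat l)^[k] ↑x = ↑w → ‖w - x0‖ < ε}

/-!
On every cell the height `z` of a point is mapped by one law: the new height `z'` satisfies
`z' (c + sinh² z) = λ sinh z cosh z`, where `c = cos² M` on even cells and `c = sin² M` on odd
ones (`M` the folded `Mxy`). So the sign of the height is preserved, and an orbit starting at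
`z ≤ 0` stays away from `(0, 0, ξ₀)`.

For `z > 0`, `c ≤ 1` gives `z' ≥ λ tanh z`, so the heights eventually exceed every `a < ξ₀`.
The horizontal size `H = Mxy x y` satisfies `H' (c + sinh² z) ≤ λ H`, so `H / z` shrinks by the
factor `1 / cosh a` at each step and `H → 0`. The orbit then enters the central cell, where
`c = cos² M ≥ 1 - H²`, hence `z' ≤ λ tanh z + 2 λ H²`; as `λ tanh` has slope
`λ / cosh² ξ₀ < 1` beyond `ξ₀`, the overshoot above `ξ₀` dies out too.
-/

lemma sinh_le_mul_cosh {x : ℝ} (hx : 0 ≤ x) : sinh x ≤ x * cosh x := by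
  have hmono : MonotoneOn (fun t => t * cosh t - sinh t) (Ici 0) := by
    refine monotoneOn_of_deriv_nonneg (convex_Ici 0) (by fun_prop) (by fun_prop) fun t ht => ?_
    rw [interior_Ici, mem_Ioi] at ht
    have hd : HasDerivAt (fun t => t * cosh t - sinh t) (1 * cosh t + t * sinh t - cosh t) t :=
      ((hasDerivAt_id t).mul (hasDerivAt_cosh t)).sub (hasDerivAt_sinh t)
    rw [hd.deriv]
    nlinarith [sinh_pos_iff.2 ht]
  simpa using hmono self_mem_Ici hx hx

lemma lt_sinh_mul_cosh {x : ℝ} (hx : 0 < x) : x < sinh x * cosh x := by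
  nlinarith [self_lt_sinh_iff.2 hx, one_le_cosh x]

lemma tanh_sub_tanh (a b : ℝ) : tanh b - tanh a = sinh (b - a) / (cosh b * cosh a) := by
  rw [tanh_eq_sinh_div_cosh, tanh_eq_sinh_div_cosh, sinh_sub]
  field_simp [(cosh_pos a).ne', (cosh_pos b).ne']

lemma tanh_monotone : Monotone tanh := fun a b hab => by
  have := tanh_sub_tanh a b
  have : 0 ≤ sinh (b - a) / (cosh b * cosh a) :=
    div_nonneg (sinh_nonneg_iff.2 (sub_nonneg.2 hab)) (by positivity)
  linarith

lemma tanh_pos_of_pos {x : ℝ} (hx : 0 < x) : 0 < tanh x := by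
  rw [tanh_eq_sinh_div_cosh]
  exact div_pos (sinh_pos_iff.2 hx) (cosh_pos x)

lemma continuous_tanh : Continuous tanh := by
  simp_rw [funext tanh_eq_sinh_div_cosh]
  exact continuous_sinh.div continuous_cosh fun x => (cosh_pos x).ne'

lemma tanh_sub_tanh_le {a b : ℝ} (ha : 0 ≤ a) (hab : a ≤ b) :
    tanh b - tanh a ≤ (b - a) / cosh a ^ 2 := by
  obtain ⟨d, hd, rfl⟩ : ∃ d, 0 ≤ d ∧ b = a + d := ⟨b - a, by linarith, by ring⟩
  have hcosh : cosh a * cosh d ≤ cosh (a + d) := by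
    rw [cosh_add]
    nlinarith [sinh_nonneg_iff.2 ha, sinh_nonneg_iff.2 hd]
  have key : sinh d * cosh a ≤ d * cosh (a + d) := by
    nlinarith [mul_le_mul_of_nonneg_right (sinh_le_mul_cosh hd) (cosh_pos a).le,
      mul_le_mul_of_nonneg_left hcosh hd]
  rw [tanh_sub_tanh, add_sub_cancel_left, div_le_div_iff₀ (by positivity) (by positivity)]
  nlinarith [mul_le_mul_of_nonneg_right key (cosh_pos a).le]

section FixedPoint

variable {l ξ0 : ℝ}

lemma lt_mul_tanh_of_lt (hξ : ξ0 = l * tanh ξ0) {t : ℝ} (ht : 0 < t) (htξ : t < ξ0) :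
    t < l * tanh t := by
  have hslope := tanh_sub_tanh_le ht.le htξ.le
  have htanh : t / cosh t ^ 2 < tanh t := by
    rw [div_lt_iff₀ (by positivity), tanh_eq_sinh_div_cosh, pow_two, ← mul_assoc,
      div_mul_cancel₀ _ (cosh_pos t).ne']
    exact lt_sinh_mul_cosh ht
  have hξ0 : 0 < ξ0 := ht.trans htξ
  have hl : 0 < l := pos_of_mul_pos_left (hξ ▸ hξ0) (tanh_pos_of_pos hξ0).le
  have key : t * tanh ξ0 < ξ0 * tanh t := by
    have h1 : t * (tanh ξ0 - tanh t) ≤ (ξ0 - t) * (t / cosh t ^ 2) := by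
      rw [mul_div_assoc', mul_comm (ξ0 - t), mul_div_assoc]
      exact mul_le_mul_of_nonneg_left hslope ht.le
    nlinarith [mul_lt_mul_of_pos_left htanh (sub_pos.2 htξ)]
  have : t * ξ0 < ξ0 * (l * tanh t) := by
    nlinarith [mul_lt_mul_of_pos_left key hl]
  nlinarith

lemma lt_cosh_sq (hξ0 : 0 < ξ0) (hξ : ξ0 = l * tanh ξ0) : l < cosh ξ0 ^ 2 := by
  have hsc : sinh ξ0 * cosh ξ0 = tanh ξ0 * cosh ξ0 ^ 2 := by
    rw [tanh_eq_sinh_div_cosh]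
    field_simp [(cosh_pos ξ0).ne']
  have h := lt_sinh_mul_cosh hξ0
  rw [hsc] at h
  nth_rewrite 1 [hξ] at h
  exact lt_of_mul_lt_mul_right (by linarith) (tanh_pos_of_pos hξ0).le

lemma mul_tanh_sub_le (hl : 0 ≤ l) (hξ0 : 0 ≤ ξ0) (hξ : ξ0 = l * tanh ξ0) (z : ℝ) :
    l * tanh z - ξ0 ≤ l / cosh ξ0 ^ 2 * max (z - ξ0) 0 := by
  rcases le_total z ξ0 with h | h
  · have := mul_le_mul_of_nonneg_left (tanh_monotone h) hl
    have : 0 ≤ l / cosh ξ0 ^ 2 * max (z - ξ0) 0 := by positivity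
    linarith
  · rw [max_eq_left (sub_nonneg.2 h)]
    have := mul_le_mul_of_nonneg_left (tanh_sub_tanh_le hξ0 h) hl
    rw [mul_sub, ← hξ] at this
    exact this.trans_eq (by ring)

end FixedPoint

lemma tendsto_zero_of_le_mul_add {L : ℝ} (hL0 : 0 ≤ L) (hL1 : L < 1) {d u : ℕ → ℝ}
    (hd : ∀ k, 0 ≤ d k) (hrec : ∀ᶠ k in atTop, d (k + 1) ≤ L * d k + u k)
    (hu : Tendsto u atTop (𝓝 0)) : Tendsto d atTop (𝓝 0) := by
  refine tendsto_order.2 ⟨fun a ha => Eventually.of_forall fun k => ha.trans_le (hd k),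
    fun ε hε => ?_⟩
  have hu' : ∀ᶠ k in atTop, u k < (1 - L) * ε / 2 :=
    hu.eventually (gt_mem_nhds (by nlinarith))
  obtain ⟨K, hK⟩ := eventually_atTop.1 (hrec.and hu')
  have hgeom : ∀ j, d (K + j) ≤ L ^ j * d K + ε / 2 := by
    intro j
    induction j with
    | zero => simp only [add_zero, pow_zero, one_mul]; linarith
    | succ j ih =>
      obtain ⟨hstep, hsmall⟩ := hK (K + j) (Nat.le_add_right K j)
      calc d (K + (j + 1)) ≤ L * d (K + j) + u (K + j) := hstep
        _ ≤ L * (L ^ j * d K + ε / 2) + (1 - L) * ε / 2 := by gcongr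
        _ = L ^ (j + 1) * d K + ε / 2 := by ring
  have hpow : ∀ᶠ j in atTop, L ^ j * d K < ε / 2 := by
    have := (tendsto_pow_atTop_nhds_zero_of_lt_one hL0 hL1).mul_const (d K)
    rw [zero_mul] at this
    exact this.eventually (gt_mem_nhds (by linarith))
  obtain ⟨J, hJ⟩ := eventually_atTop.1 hpow
  refine eventually_atTop.2 ⟨K + J, fun k hk => ?_⟩
  obtain ⟨j, rfl⟩ := Nat.exists_eq_add_of_le (le_trans (Nat.le_add_right K J) hk)
  linarith [hgeom j, hJ j (by omega)]

lemma eventually_lt_of_mul_tanh_le {l ξ0 : ℝ} (hl : 0 < l) (hξ0 : 0 < ξ0)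
    (hξ : ξ0 = l * tanh ξ0) {z : ℕ → ℝ} (hz0 : 0 < z 0)
    (hrec : ∀ k, l * tanh (z k) ≤ z (k + 1)) {a : ℝ} (ha : a < ξ0) :
    ∀ᶠ k in atTop, a < z k := by
  set g : ℝ → ℝ := fun t => l * tanh t
  have hg : Monotone g := fun s t hst => mul_le_mul_of_nonneg_left (tanh_monotone hst) hl.le
  -- the orbit of `g` from `min (z 0) ξ0` is a lower barrier for `z` increasing to `ξ0`
  set m : ℕ → ℝ := fun k => g^[k] (min (z 0) ξ0)
  have hm_succ : ∀ k, m (k + 1) = g (m k) := fun k => Function.iterate_succ_apply' g k _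
  have hm : ∀ k, 0 < m k ∧ m k ≤ ξ0 ∧ m k ≤ z k := by
    intro k
    induction k with
    | zero => exact ⟨lt_min hz0 hξ0, min_le_right _ _, min_le_left _ _⟩
    | succ k ih =>
      rw [hm_succ]
      exact ⟨mul_pos hl (tanh_pos_of_pos ih.1), hξ ▸ hg ih.2.1, (hg ih.2.2).trans (hrec k)⟩
  have hm_mono : Monotone m := monotone_nat_of_le_succ fun k => by
    rw [hm_succ]
    rcases (hm k).2.1.lt_or_eq with h | h
    · exact (lt_mul_tanh_of_lt hξ (hm k).1 h).le
    · rw [h]; exact hξ.le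
  have hbdd : BddAbove (range m) := ⟨ξ0, by rintro _ ⟨k, rfl⟩; exact (hm k).2.1⟩
  have hlim : Tendsto m atTop (𝓝 (⨆ k, m k)) := tendsto_atTop_ciSup hm_mono hbdd
  have hfixed : g (⨆ k, m k) = ⨆ k, m k := by
    refine tendsto_nhds_unique (((continuous_tanh.const_mul l).tendsto _).comp hlim) ?_
    convert hlim.comp (tendsto_add_atTop_nat 1) using 1
    exact funext fun k => (hm_succ k).symm
  have hsup : ⨆ k, m k = ξ0 := by
    refine (ciSup_le fun k => (hm k).2.1).antisymm (not_lt.1 fun h => ?_)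
    have := lt_mul_tanh_of_lt hξ ((hm 0).1.trans_le (le_ciSup hbdd 0)) h
    exact this.ne' hfixed
  filter_upwards [hlim.eventually (lt_mem_nhds (hsup ▸ ha))] with k hk
  exact hk.trans_le (hm k).2.2

section HeightStep

variable {l z c y : ℝ}

lemma height_step_nonneg (hl : 0 ≤ l) (hz : 0 < z) (hc0 : 0 ≤ c)
    (h : y * (c + sinh z ^ 2) = l * (sinh z * cosh z)) : 0 ≤ y := by
  have hs := sinh_pos_iff.2 hz
  have : 0 ≤ y * (c + sinh z ^ 2) := h ▸ by positivity
  exact nonneg_of_mul_nonneg_left this (by positivity)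

lemma mul_tanh_le_of_height_step (hl : 0 ≤ l) (hz : 0 < z) (hc0 : 0 ≤ c) (hc1 : c ≤ 1)
    (h : y * (c + sinh z ^ 2) = l * (sinh z * cosh z)) : l * tanh z ≤ y := by
  have hs := sinh_pos_iff.2 hz
  have hD : 0 < c + sinh z ^ 2 := by positivity
  rw [tanh_eq_sinh_div_cosh, mul_div_assoc', div_le_iff₀ (cosh_pos z)]
  refine le_of_mul_le_mul_right ?_ hD
  have hDle : c + sinh z ^ 2 ≤ cosh z ^ 2 := by rw [cosh_sq]; linarith
  have e : y * cosh z * (c + sinh z ^ 2) = l * sinh z * cosh z ^ 2 := by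
    linear_combination cosh z * h
  nlinarith [mul_le_mul_of_nonneg_left hDle (by positivity : 0 ≤ l * sinh z)]

lemma height_step_mul_tanh_le (hl : 0 ≤ l) (hz : 0 < z) (hc0 : 0 ≤ c)
    (h : y * (c + sinh z ^ 2) = l * (sinh z * cosh z)) : y * tanh z ≤ l := by
  have hs := sinh_pos_iff.2 hz
  have hy := height_step_nonneg hl hz hc0 h
  rw [tanh_eq_sinh_div_cosh, mul_div_assoc', div_le_iff₀ (cosh_pos z)]
  refine le_of_mul_le_mul_right ?_ hs
  nlinarith [mul_nonneg hy hc0]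

lemma height_step_le (hl : 0 ≤ l) (hz : 0 < z) {ε : ℝ} (hε0 : 0 ≤ ε) (hε : ε ≤ 1 / 2)
    (hc : 1 - ε ≤ c) (h : y * (c + sinh z ^ 2) = l * (sinh z * cosh z)) :
    y ≤ l * tanh z + 2 * l * ε := by
  have hs := sinh_pos_iff.2 hz
  have hch := cosh_pos z
  have hD : 1 / 2 ≤ c + sinh z ^ 2 := by nlinarith [cosh_sq z, one_le_cosh z]
  have hsc : sinh z ≤ cosh z := by nlinarith [cosh_sq z]
  rw [tanh_eq_sinh_div_cosh, mul_div_assoc', div_add' _ _ _ hch.ne', le_div_iff₀ hch]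
  refine le_of_mul_le_mul_right ?_ (by linarith : 0 < c + sinh z ^ 2)
  have e : y * cosh z * (c + sinh z ^ 2) = l * sinh z * cosh z ^ 2 := by
    linear_combination cosh z * h
  have hDge : cosh z ^ 2 - ε ≤ c + sinh z ^ 2 := by rw [cosh_sq]; linarith
  nlinarith [mul_le_mul_of_nonneg_left hDge (by positivity : 0 ≤ l * sinh z),
    mul_le_mul_of_nonneg_left hD (by positivity : 0 ≤ 2 * l * ε * cosh z),
    mul_le_mul_of_nonneg_left hsc (mul_nonneg hl hε0)]

lemma mul_le_of_height_step (hl : 0 < l) (hz : 0 < z) (hc0 : 0 ≤ c)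
    (h : y * (c + sinh z ^ 2) = l * (sinh z * cosh z)) {H H' : ℝ}
    (hH : H' * (c + sinh z ^ 2) ≤ l * H) : H' * (sinh z * cosh z) ≤ y * H := by
  have hy := height_step_nonneg hl.le hz hc0 h
  refine le_of_mul_le_mul_left ?_ hl
  calc l * (H' * (sinh z * cosh z)) = y * (H' * (c + sinh z ^ 2)) := by
        linear_combination (-H') * h
    _ ≤ y * (l * H) := mul_le_mul_of_nonneg_left hH hy
    _ = l * (y * H) := by ring

end HeightStep

section HeightSequence

variable {l : ℝ} {z c H : ℕ → ℝ}

lemma tendsto_zero_of_height_steps (hl : 0 < l) (hz : ∀ k, 0 < z k) (hH : ∀ k, 0 ≤ H k)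
    (hc0 : ∀ k, 0 ≤ c k)
    (hzs : ∀ k, z (k + 1) * (c k + sinh (z k) ^ 2) = l * (sinh (z k) * cosh (z k)))
    (hHs : ∀ k, H (k + 1) * (c k + sinh (z k) ^ 2) ≤ l * H k)
    {a : ℝ} (ha : 0 < a) (hlow : ∀ᶠ k in atTop, a ≤ z k) : Tendsto H atTop (𝓝 0) := by
  have hratio : ∀ᶠ k in atTop, H (k + 1) / z (k + 1) ≤ (cosh a)⁻¹ * (H k / z k) + 0 := by
    filter_upwards [hlow] with k hk
    have hstep := mul_le_of_height_step hl (hz k) (hc0 k) (hzs k) (hHs k)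
    have hsc : z k * cosh a ≤ sinh (z k) * cosh (z k) :=
      mul_le_mul (self_le_sinh_iff.2 (hz k).le) (cosh_le_cosh.2 (by
        rwa [abs_of_pos ha, abs_of_pos (hz k)])) (cosh_pos a).le (sinh_nonneg_iff.2 (hz k).le)
    rw [add_zero, inv_mul_eq_div, div_div, div_le_div_iff₀ (hz _) (by have := hz k; positivity)]
    nlinarith [mul_le_mul_of_nonneg_left hsc (hH (k + 1))]
  have hratio_lim : Tendsto (fun k => H k / z k) atTop (𝓝 0) :=
    tendsto_zero_of_le_mul_add (by positivity) (inv_lt_one_of_one_lt₀ (one_lt_cosh.2 ha.ne'))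
      (fun k => div_nonneg (hH k) (hz k).le) hratio tendsto_const_nhds
  have hbound : ∀ᶠ k in atTop, z k ≤ l / tanh a := by
    rw [← map_add_atTop_eq_nat 1, eventually_map]
    filter_upwards [hlow] with k hk
    have := height_step_mul_tanh_le hl.le (hz k) (hc0 k) (hzs k)
    rw [le_div_iff₀ (tanh_pos_of_pos ha)]
    nlinarith [tanh_monotone hk, (hz (k + 1)).le]
  refine squeeze_zero' (Eventually.of_forall hH) ?_
    (by simpa using hratio_lim.const_mul (l / tanh a))
  filter_upwards [hbound] with k hk
  rw [mul_div_assoc', le_div_iff₀ (hz k)]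
  linarith [mul_le_mul_of_nonneg_right hk (hH k)]

lemma eventually_lt_of_height_steps {ξ0 δ : ℝ} (hl : 0 < l) (hξ0 : 0 < ξ0)
    (hξ : ξ0 = l * tanh ξ0) (hz : ∀ k, 0 < z k)
    (hzs : ∀ k, z (k + 1) * (c k + sinh (z k) ^ 2) = l * (sinh (z k) * cosh (z k)))
    (hHlim : Tendsto H atTop (𝓝 0)) (hδ : 0 < δ) (hcH : ∀ k, H k < δ → 1 - H k ^ 2 ≤ c k)
    {b : ℝ} (hb : ξ0 < b) : ∀ᶠ k in atTop, z k < b := by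
  have hL1 : l / cosh ξ0 ^ 2 < 1 := (div_lt_one (by positivity)).2 (lt_cosh_sq hξ0 hξ)
  have hsq : Tendsto (fun k => H k ^ 2) atTop (𝓝 0) := by simpa using hHlim.pow 2
  have hrec : ∀ᶠ k in atTop, max (z (k + 1) - ξ0) 0 ≤
      l / cosh ξ0 ^ 2 * max (z k - ξ0) 0 + 2 * l * H k ^ 2 := by
    filter_upwards [hHlim.eventually (gt_mem_nhds hδ),
      hsq.eventually (ge_mem_nhds (by norm_num : (0 : ℝ) < 1 / 2))] with k hkδ hk2
    have hstep := height_step_le hl.le (hz k) (sq_nonneg _) hk2 (hcH k hkδ) (hzs k)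
    have hslope := mul_tanh_sub_le hl.le hξ0.le hξ (z k)
    exact max_le (by linarith) (by positivity)
  have hover := tendsto_zero_of_le_mul_add (d := fun k => max (z k - ξ0) 0) (by positivity) hL1
    (fun k => le_max_right _ _) hrec
    (by simpa using hsq.const_mul (2 * l))
  filter_upwards [hover.eventually (gt_mem_nhds (sub_pos.2 hb))] with k hk
  linarith [le_max_left (z k - ξ0) 0]

theorem tendsto_of_height_steps {ξ0 δ : ℝ} (hl : 0 < l) (hξ0 : 0 < ξ0) (hξ : ξ0 = l * tanh ξ0)
    (hz : ∀ k, 0 < z k) (hH : ∀ k, 0 ≤ H k) (hc0 : ∀ k, 0 ≤ c k) (hc1 : ∀ k, c k ≤ 1)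
    (hzs : ∀ k, z (k + 1) * (c k + sinh (z k) ^ 2) = l * (sinh (z k) * cosh (z k)))
    (hHs : ∀ k, H (k + 1) * (c k + sinh (z k) ^ 2) ≤ l * H k)
    (hδ : 0 < δ) (hcH : ∀ k, H k < δ → 1 - H k ^ 2 ≤ c k) :
    Tendsto z atTop (𝓝 ξ0) ∧ Tendsto H atTop (𝓝 0) := by
  have hlow : ∀ a < ξ0, ∀ᶠ k in atTop, a < z k := fun a ha =>
    eventually_lt_of_mul_tanh_le hl hξ0 hξ (hz 0)
      (fun k => mul_tanh_le_of_height_step hl.le (hz k) (hc0 k) (hc1 k) (hzs k)) ha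
  have hHlim : Tendsto H atTop (𝓝 0) :=
    tendsto_zero_of_height_steps hl hz hH hc0 hzs hHs (half_pos hξ0)
      ((hlow _ (half_lt_self hξ0)).mono fun _ => le_of_lt)
  exact ⟨tendsto_order.2 ⟨hlow, fun b hb =>
    eventually_lt_of_height_steps hl hξ0 hξ hz hzs hHlim hδ hcH hb⟩, hHlim⟩

end HeightSequence

@[simp] lemma mk3_apply_zero (x y z : ℝ) : mk3 x y z 0 = x := rfl

@[simp] lemma mk3_apply_one (x y z : ℝ) : mk3 x y z 1 = y := rfl

@[simp] lemma mk3_apply_two (x y z : ℝ) : mk3 x y z 2 = z := rfl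

lemma norm_sq_R3 (w : R3) : ‖w‖ ^ 2 = w 0 ^ 2 + w 1 ^ 2 + w 2 ^ 2 := by
  simp [EuclideanSpace.norm_sq_eq, Fin.sum_univ_three]

lemma Mxy_nonneg (x y : ℝ) : 0 ≤ Mxy x y := (abs_nonneg x).trans (le_max_left _ _)

lemma Mxy_mul_left (a x y : ℝ) : Mxy (a * x) (a * y) = |a| * Mxy x y := by
  simp only [Mxy, abs_mul, mul_max_of_nonneg _ _ (abs_nonneg a)]

lemma Mxy_le_sqrt (x y : ℝ) : Mxy x y ≤ √(x ^ 2 + y ^ 2) :=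
  max_le (abs_le_sqrt (by nlinarith)) (abs_le_sqrt (by nlinarith))

lemma tendsto_mk3_zero_zero {V : ℕ → R3} {ξ : ℝ}
    (hH : Tendsto (fun k => Mxy (V k 0) (V k 1)) atTop (𝓝 0))
    (hz : Tendsto (fun k => V k 2) atTop (𝓝 ξ)) : Tendsto V atTop (𝓝 (mk3 0 0 ξ)) := by
  rw [(PiLp.homeomorph 2 _).isInducing.tendsto_nhds_iff, tendsto_pi_nhds]
  intro i
  fin_cases i
  · exact squeeze_zero_norm (fun k => le_max_left _ _) hH
  · exact squeeze_zero_norm (fun k => le_max_right _ _) hH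
  · exact hz

lemma abs_fold_le (t : ℝ) : |fold t| ≤ π / 4 := by
  have h1 : (jfold t : ℝ) ≤ (t + π / 4) / (π / 2) := Int.floor_le _
  have h2 : (t + π / 4) / (π / 2) < jfold t + 1 := Int.lt_floor_add_one _
  rw [le_div_iff₀ (by positivity)] at h1
  rw [div_lt_iff₀ (by positivity)] at h2
  rw [fold, abs_mul, abs_neg_one_zpow, one_mul, abs_le]
  constructor <;> linarith

lemma jfold_of_abs_lt {t : ℝ} (ht : |t| < π / 4) : jfold t = 0 := by
  obtain ⟨h1, h2⟩ := abs_lt.1 ht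
  rw [jfold, Int.floor_eq_zero_iff, mem_Ico, le_div_iff₀ (by positivity),
    div_lt_iff₀ (by positivity)]
  constructor <;> linarith

lemma fold_of_abs_lt {t : ℝ} (ht : |t| < π / 4) : fold t = t := by
  simp [fold, jfold_of_abs_lt ht]

lemma abs_fold_le_abs (t : ℝ) : |fold t| ≤ |t| := by
  rcases lt_or_ge |t| (π / 4) with ht | ht
  · rw [fold_of_abs_lt ht]
  · exact (abs_fold_le t).trans ht

section BeamMap

lemma sq_add_sq_pos {p q : ℝ} (h : ¬(p = 0 ∧ q = 0)) : 0 < p ^ 2 + q ^ 2 := by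
  contrapose! h
  simpa using (add_eq_zero_iff_of_nonneg (sq_nonneg p) (sq_nonneg q)).1
    (le_antisymm h (by positivity))

variable (p q : ℝ)

lemma T0_apply_two (z : ℝ) :
    T0 p q z 2 = sinh z * cosh z / (cos (Mxy p q) ^ 2 + sinh z ^ 2) := by
  unfold T0
  split_ifs with h
  · have hc := cosh_pos z
    simp only [h.1, h.2, Mxy, abs_zero, max_self, cos_zero, mk3_apply_two, tanh_eq_sinh_div_cosh]
    rw [one_pow, add_comm, ← cosh_sq]
    field_simp
  · rfl

lemma Mxy_T0_mul_le {z : ℝ} (hz : z ≠ 0) :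
    Mxy (T0 p q z 0) (T0 p q z 1) * (cos (Mxy p q) ^ 2 + sinh z ^ 2) ≤
      |sin (Mxy p q) * cos (Mxy p q)| := by
  have hD : 0 < cos (Mxy p q) ^ 2 + sinh z ^ 2 := by
    have := sinh_ne_zero.2 hz; positivity
  unfold T0
  split_ifs with h
  · simp only [mk3_apply_zero, mk3_apply_one, Mxy, abs_zero, max_self, zero_mul]
    positivity
  · set M := Mxy p q
    set r := √(p ^ 2 + q ^ 2)
    have hr : 0 < r := sqrt_pos.2 (sq_add_sq_pos h)
    have hcoord : ∀ x : ℝ, x * cos M * sin M / (r * (cos M ^ 2 + sinh z ^ 2)) =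
        sin M * cos M / (r * (cos M ^ 2 + sinh z ^ 2)) * x := fun x => by ring
    simp only [mk3_apply_zero, mk3_apply_one, hcoord]
    rw [Mxy_mul_left, abs_div, abs_of_pos (mul_pos hr hD)]
    calc |sin M * cos M| / (r * (cos M ^ 2 + sinh z ^ 2)) * M * (cos M ^ 2 + sinh z ^ 2)
        = M / r * |sin M * cos M| := by field_simp
      _ ≤ 1 * |sin M * cos M| := by
        gcongr
        exact (div_le_one hr).2 (Mxy_le_sqrt p q)
      _ = |sin M * cos M| := one_mul _

lemma norm_sq_T0_mul {z : ℝ} (hz : z ≠ 0) :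
    ‖T0 p q z‖ ^ 2 * (cos (Mxy p q) ^ 2 + sinh z ^ 2) = sin (Mxy p q) ^ 2 + sinh z ^ 2 := by
  have hD : 0 < cos (Mxy p q) ^ 2 + sinh z ^ 2 := by
    have := sinh_ne_zero.2 hz; positivity
  rw [norm_sq_R3]
  unfold T0
  split_ifs with h
  · simp only [mk3_apply_zero, mk3_apply_one, mk3_apply_two, h.1, h.2, Mxy, abs_zero, max_self,
      cos_zero, sin_zero, tanh_eq_sinh_div_cosh]
    have := cosh_pos z
    field_simp
    linear_combination -(sinh z ^ 2) * cosh_sq z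
  · set M := Mxy p q
    have hpq := sq_add_sq_pos h
    have hr := sq_sqrt hpq.le
    have hr0 := sqrt_pos.2 hpq
    simp only [mk3_apply_zero, mk3_apply_one, mk3_apply_two]
    field_simp
    rw [hr]
    linear_combination (p ^ 2 + q ^ 2) * sinh z ^ 2 * (cosh_sq z - sin_sq_add_cos_sq M)

end BeamMap

section GeneralizedTangent

/-- On an odd cell `T` is `T₀` followed by the inversion `w ↦ w / ‖w‖²`, which turns the
denominator `cos² M + sinh² z` of the height into `sin² M + sinh² z`. -/
def cellWeight (v : R3) : ℝ :=
  if Even (jfold (v 0) + jfold (v 1)) then cos (Mxy (fold (v 0)) (fold (v 1))) ^ 2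
  else sin (Mxy (fold (v 0)) (fold (v 1))) ^ 2

lemma cellWeight_nonneg (v : R3) : 0 ≤ cellWeight v := by
  unfold cellWeight; split_ifs <;> positivity

lemma cellWeight_le_one (v : R3) : cellWeight v ≤ 1 := by
  unfold cellWeight; split_ifs
  exacts [cos_sq_le_one _, sin_sq_le_one _]

lemma one_sub_sq_le_cellWeight {v : R3} (hv : Mxy (v 0) (v 1) < π / 4) :
    1 - Mxy (v 0) (v 1) ^ 2 ≤ cellWeight v := by
  have h0 : |v 0| < π / 4 := (le_max_left _ _).trans_lt hv
  have h1 : |v 1| < π / 4 := (le_max_right _ _).trans_lt hv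
  rw [cellWeight, jfold_of_abs_lt h0, jfold_of_abs_lt h1, fold_of_abs_lt h0, fold_of_abs_lt h1,
    if_pos (by decide), cos_sq']
  linarith [sin_sq_le_sq (x := Mxy (v 0) (v 1))]

variable {l : ℝ} {v w : R3}

lemma Tmap_eq_coe_smul {u : R3} (h : Tmap v = ↑u) :
    ∃ κ : ℝ, u = κ • T0 (fold (v 0)) (fold (v 1)) (v 2) := by
  simp only [Tmap] at h
  split_ifs at h
  · exact ⟨1, by rw [one_smul]; exact (OnePoint.coe_injective h).symm⟩
  · exact absurd h (OnePoint.infty_ne_coe u)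
  · exact ⟨_, (OnePoint.coe_injective h).symm⟩

lemma Tmap_of_height_ne_zero (hz : v 2 ≠ 0) :
    ∃ κ : ℝ, 0 ≤ κ ∧
      κ * (cellWeight v + sinh (v 2) ^ 2) =
        cos (Mxy (fold (v 0)) (fold (v 1))) ^ 2 + sinh (v 2) ^ 2 ∧
      Tmap v = ↑(κ • T0 (fold (v 0)) (fold (v 1)) (v 2)) := by
  have hnorm := norm_sq_T0_mul (fold (v 0)) (fold (v 1)) hz
  have hE : 0 < sin (Mxy (fold (v 0)) (fold (v 1))) ^ 2 + sinh (v 2) ^ 2 := by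
    have := sinh_ne_zero.2 hz; positivity
  simp only [Tmap, cellWeight]
  split_ifs with hev hT
  · exact ⟨1, zero_le_one, one_mul _, by rw [one_smul]⟩
  · rw [hT, norm_zero, zero_pow two_ne_zero, zero_mul] at hnorm
    exact absurd hnorm hE.ne
  · refine ⟨_, by positivity, ?_, rfl⟩
    rw [← hnorm, inv_mul_cancel_left₀ (by positivity)]

lemma Tl_of_Tmap {u : R3} (h : Tmap v = ↑u) : Tl l v = ((l • u : R3) : OnePoint R3) := by
  rw [Tl, h]; rfl

lemma exists_Tmap_of_Tl (h : Tl l v = ↑w) : ∃ u : R3, Tmap v = ↑u ∧ w = l • u := by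
  unfold Tl at h
  cases hT : Tmap v with
  | infty => rw [hT] at h; exact absurd h (OnePoint.infty_ne_coe w)
  | coe u => rw [hT] at h; exact ⟨u, rfl, (OnePoint.coe_injective h).symm⟩

lemma exists_Tl_of_height_ne_zero (hl : 0 ≤ l) (hz : v 2 ≠ 0) :
    ∃ w : R3, Tl l v = ↑w ∧
      w 2 * (cellWeight v + sinh (v 2) ^ 2) = l * (sinh (v 2) * cosh (v 2)) ∧
      Mxy (w 0) (w 1) * (cellWeight v + sinh (v 2) ^ 2) ≤ l * Mxy (v 0) (v 1) := by
  obtain ⟨κ, hκ0, hκ, hT⟩ := Tmap_of_height_ne_zero hz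
  set T := T0 (fold (v 0)) (fold (v 1)) (v 2)
  set M := Mxy (fold (v 0)) (fold (v 1))
  have hD : 0 < cos M ^ 2 + sinh (v 2) ^ 2 := by have := sinh_ne_zero.2 hz; positivity
  refine ⟨l • κ • T, Tl_of_Tmap hT, ?_, ?_⟩
  · have hT2 : T 2 * (cos M ^ 2 + sinh (v 2) ^ 2) = sinh (v 2) * cosh (v 2) := by
      rw [T0_apply_two, div_mul_cancel₀ _ hD.ne']
    calc (l • κ • T) 2 * (cellWeight v + sinh (v 2) ^ 2)
        = l * (T 2 * (κ * (cellWeight v + sinh (v 2) ^ 2))) := by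
          simp only [PiLp.smul_apply, smul_eq_mul]; ring
      _ = l * (sinh (v 2) * cosh (v 2)) := by rw [hκ, hT2]
  · have hsincos : |sin M * cos M| ≤ Mxy (v 0) (v 1) :=
      calc |sin M * cos M| ≤ |M| := by
            rw [abs_mul]
            exact (mul_le_of_le_one_right (abs_nonneg _) (abs_cos_le_one M)).trans abs_sin_le_abs
        _ ≤ Mxy (v 0) (v 1) := by
            rw [abs_of_nonneg (Mxy_nonneg _ _)]
            exact max_le_max (abs_fold_le_abs _) (abs_fold_le_abs _)
    calc Mxy ((l • κ • T) 0) ((l • κ • T) 1) * (cellWeight v + sinh (v 2) ^ 2)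
        = l * (Mxy (T 0) (T 1) * (κ * (cellWeight v + sinh (v 2) ^ 2))) := by
          simp only [PiLp.smul_apply, smul_eq_mul, Mxy_mul_left, abs_of_nonneg hl,
            abs_of_nonneg hκ0]
          ring
      _ ≤ l * Mxy (v 0) (v 1) := by
          rw [hκ]
          exact mul_le_mul_of_nonneg_left ((Mxy_T0_mul_le _ _ hz).trans hsincos) hl

lemma Tl_apply_two_of_height_eq_zero (hz : v 2 = 0) (h : Tl l v = ↑w) : w 2 = 0 := by
  obtain ⟨u, hu, rfl⟩ := exists_Tmap_of_Tl h
  obtain ⟨κ, rfl⟩ := Tmap_eq_coe_smul hu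
  simp [T0_apply_two, hz]

lemma Tl_apply_two_nonpos (hl : 0 ≤ l) (hz : v 2 ≤ 0) (h : Tl l v = ↑w) : w 2 ≤ 0 := by
  rcases hz.lt_or_eq with hz | hz
  · obtain ⟨w', hw', hw'2, -⟩ := exists_Tl_of_height_ne_zero hl hz.ne
    obtain rfl : w' = w := OnePoint.coe_injective (hw'.symm.trans h)
    have hs : sinh (v 2) < 0 := sinh_neg_iff.2 hz
    have hD : 0 < cellWeight v + sinh (v 2) ^ 2 := by
      have := cellWeight_nonneg v; have := hs.ne; positivity
    refine nonpos_of_mul_nonpos_left ?_ hD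
    rw [hw'2]
    exact mul_nonpos_of_nonneg_of_nonpos hl
      (mul_nonpos_of_nonpos_of_nonneg hs.le (cosh_pos _).le)
  · exact (Tl_apply_two_of_height_eq_zero hz h).le

lemma exists_Tl_of_height_pos (hl : 0 < l) (hz : 0 < v 2) :
    ∃ w : R3, 0 < w 2 ∧ Tl l v = ↑w := by
  obtain ⟨w, hw, hw2, -⟩ := exists_Tl_of_height_ne_zero hl.le hz.ne'
  have hD := add_nonneg (cellWeight_nonneg v) (sq_nonneg (sinh (v 2)))
  refine ⟨w, pos_of_mul_pos_left ?_ hD, hw⟩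
  rw [hw2]
  exact mul_pos hl (mul_pos (sinh_pos_iff.2 hz) (cosh_pos _))

end GeneralizedTangent

section Orbit

variable {l : ℝ} {x : R3}

lemma iterate_TlHat_succ {k : ℕ} {v : R3} (h : (TlHat l)^[k] ↑x = ↑v) :
    (TlHat l)^[k + 1] ↑x = Tl l v := by
  rw [Function.iterate_succ_apply', h]; rfl

lemma iterate_TlHat_mem {s : Set R3} (hs : ∀ v ∈ s, ∀ w : R3, Tl l v = ↑w → w ∈ s) (hx : x ∈ s)
    (k : ℕ) {w : R3} (hw : (TlHat l)^[k] ↑x = ↑w) : w ∈ s := by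
  induction k generalizing w with
  | zero => rwa [← OnePoint.coe_injective hw]
  | succ k ih =>
    cases hk : (TlHat l)^[k] ↑x with
    | infty =>
      rw [Function.iterate_succ_apply', hk] at hw
      exact absurd hw (OnePoint.infty_ne_coe w)
    | coe v => exact hs v (ih hk) w (by rw [← iterate_TlHat_succ hk, hw])

lemma exists_orbit {s : Set R3} (hs : ∀ v ∈ s, ∃ w ∈ s, Tl l v = ↑w) (hx : x ∈ s) :
    ∃ V : ℕ → R3, (∀ k, V k ∈ s) ∧ ∀ k, (TlHat l)^[k] ↑x = ↑(V k) := by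
  have h : ∀ k, ∃ w ∈ s, (TlHat l)^[k] ↑x = ↑w := by
    intro k
    induction k with
    | zero => exact ⟨x, hx, rfl⟩
    | succ k ih =>
      obtain ⟨v, hv, hk⟩ := ih
      obtain ⟨w, hw, hvw⟩ := hs v hv
      exact ⟨w, hw, (iterate_TlHat_succ hk).trans hvw⟩
  choose V hV hVx using h
  exact ⟨V, hV, hVx⟩

lemma mem_basin_of_tendsto {x0 : R3} {V : ℕ → R3} (hV : ∀ k, (TlHat l)^[k] ↑x = ↑(V k))
    (hlim : Tendsto V atTop (𝓝 x0)) : x ∈ basin l x0 := by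
  refine ⟨fun k => hV k ▸ OnePoint.coe_ne_infty _, fun ε hε => ?_⟩
  obtain ⟨N, hN⟩ := Metric.tendsto_atTop.1 hlim ε hε
  refine ⟨N, fun k hk w hw => ?_⟩
  rw [OnePoint.coe_injective ((hV k).symm.trans hw).symm, ← dist_eq_norm]
  exact hN k hk

lemma notMem_basin_of_height_nonpos (hl : 0 ≤ l) {ξ0 : ℝ} (hξ0 : 0 < ξ0) (hx : x 2 ≤ 0) :
    x ∉ basin l (mk3 0 0 ξ0) := by
  rintro ⟨hfin, hconv⟩
  obtain ⟨N, hN⟩ := hconv ξ0 hξ0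
  obtain ⟨w, hw⟩ := OnePoint.ne_infty_iff_exists.1 (hfin N)
  have hw2 : w 2 ≤ 0 :=
    iterate_TlHat_mem (s := {v | v 2 ≤ 0}) (fun _ hv _ => Tl_apply_two_nonpos hl hv) hx N hw.symm
  have hdist := (PiLp.norm_apply_le (w - mk3 0 0 ξ0) 2).trans_lt (hN N le_rfl w hw.symm)
  simp only [PiLp.sub_apply, mk3_apply_two, Real.norm_eq_abs] at hdist
  linarith [abs_of_neg (by linarith : w 2 - ξ0 < 0)]

end Orbit

/-- for λ > 1, the basin of attraction of the fixed point (0,0,ξ₀) of T_λ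
is exactly the open upper half-space. -/
theorem statement7 (l ξ0 : ℝ) (hl : 1 < l) (hpos : 0 < ξ0) (hfix : ξ0 = l * Real.tanh ξ0) :
    basin l (mk3 0 0 ξ0) = {v : R3 | 0 < v 2} := by
  have hl0 : 0 < l := zero_lt_one.trans hl
  ext x
  refine ⟨fun hx => not_le.1 fun hx2 => notMem_basin_of_height_nonpos hl0.le hpos hx2 hx,
    fun hx => ?_⟩
  obtain ⟨V, hVpos, hV⟩ :=
    exists_orbit (s := {v | 0 < v 2}) (fun _ hv => exists_Tl_of_height_pos hl0 hv) hx
  have hsucc : ∀ k, Tl l (V k) = ↑(V (k + 1)) := fun k =>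
    (iterate_TlHat_succ (hV k)).symm.trans (hV _)
  have hstep : ∀ k,
      V (k + 1) 2 * (cellWeight (V k) + sinh (V k 2) ^ 2) = l * (sinh (V k 2) * cosh (V k 2)) ∧
      Mxy (V (k + 1) 0) (V (k + 1) 1) * (cellWeight (V k) + sinh (V k 2) ^ 2) ≤
        l * Mxy (V k 0) (V k 1) := by
    intro k
    obtain ⟨w, hw, hrest⟩ := exists_Tl_of_height_ne_zero hl0.le (hVpos k).ne'
    rwa [OnePoint.coe_injective (hw.symm.trans (hsucc k))] at hrest
  obtain ⟨hz, hH⟩ := tendsto_of_height_steps (c := fun k => cellWeight (V k)) hl0 hpos hfix hVpos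
    (fun k => Mxy_nonneg _ _) (fun k => cellWeight_nonneg _) (fun k => cellWeight_le_one _)
    (fun k => (hstep k).1) (fun k => (hstep k).2) (by positivity)
    (fun _ => one_sub_sq_le_cellWeight)
  exact mem_basin_of_tendsto hV (tendsto_mk3_zero_zero hH hz)
end
end

section
/- For every λ>0 and every (x,y,z)∈ℝ³ with z>0, the value T_λ(x,y,z) is a finite point of ℝ³ whose third coordinate satisfies (T_λ)₃(x,y,z) ≥ λ·tanh z. -/
noncomputable section

open Real Filter Topology Set MeasureTheory
open scoped Classical OnePoint

/-!
Write `c = cos M`, `s = sin M`, `D = c² + sinh² z`. The third coordinate of `w = T₀(x̂, ŷ, z)` is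
`sinh z cosh z / D ≥ sinh z cosh z / cosh² z = tanh z > 0`, since `c² ≤ 1`; in particular `w ≠ 0`,
so `T` is finite. When `T` inverts, its third coordinate is `w₃ / ‖w‖²`, and
`‖w‖² ≤ ((c s)² + (sinh z cosh z)²) / D²`; this gives `w₃ / ‖w‖² ≥ tanh z` because `s² ≤ 1 ≤ cosh² z`.
-/

lemma sq_norm_mk3 (x y z : ℝ) : ‖mk3 x y z‖ ^ 2 = x ^ 2 + y ^ 2 + z ^ 2 := by
  rw [EuclideanSpace.norm_eq, Real.sq_sqrt (by positivity)]
  simp [mk3, Fin.sum_univ_three, sq_abs]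

lemma sq_norm_mk3_div_le (X Y a d b : ℝ) :
    ‖mk3 (X * a / (√(X ^ 2 + Y ^ 2) * d)) (Y * a / (√(X ^ 2 + Y ^ 2) * d)) b‖ ^ 2 ≤
      (a / d) ^ 2 + b ^ 2 := by
  have hr : √(X ^ 2 + Y ^ 2) ^ 2 = X ^ 2 + Y ^ 2 := Real.sq_sqrt (by positivity)
  have hplanar : (X * a / (√(X ^ 2 + Y ^ 2) * d)) ^ 2 + (Y * a / (√(X ^ 2 + Y ^ 2) * d)) ^ 2 =
      (X ^ 2 + Y ^ 2) / (X ^ 2 + Y ^ 2) * (a / d) ^ 2 := by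
    simp only [div_pow, mul_pow, hr]
    rw [← add_div, ← add_mul, mul_div_mul_comm]
  rw [sq_norm_mk3, hplanar]
  gcongr
  exact mul_le_of_le_one_left (sq_nonneg _) (div_self_le_one _)

section Hyperbolic

variable {z : ℝ}

lemma tanh_eq_sinh_mul_cosh_div : Real.tanh z = sinh z * cosh z / (1 + sinh z ^ 2) := by
  rw [Real.tanh_eq_sinh_div_cosh, ← Real.cosh_sq', sq, mul_div_mul_right _ _ (cosh_pos z).ne']

lemma tanh_pos_of_pos_s10 (hz : 0 < z) : 0 < Real.tanh z := by
  rw [Real.tanh_eq_sinh_div_cosh]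
  exact div_pos (sinh_pos_iff.2 hz) (cosh_pos z)

lemma tanh_le_sinh_mul_cosh_div (hz : 0 < z) {c : ℝ} (hc : c ^ 2 ≤ 1) :
    Real.tanh z ≤ sinh z * cosh z / (c ^ 2 + sinh z ^ 2) := by
  have hs : 0 < sinh z := sinh_pos_iff.2 hz
  rw [tanh_eq_sinh_mul_cosh_div]
  gcongr

/-- Third coordinate of the inversion of `(c s / D, …, sinh z cosh z / D)`, `D = c² + sinh² z`,
where the first two coordinates have norm `c s / D`. -/
lemma tanh_le_sinh_mul_cosh_div_sq_add_sq (hz : 0 < z) {c s : ℝ} (hcs : s ^ 2 + c ^ 2 = 1) :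
    Real.tanh z ≤ sinh z * cosh z / (c ^ 2 + sinh z ^ 2) /
      ((c * s / (c ^ 2 + sinh z ^ 2)) ^ 2 + (sinh z * cosh z / (c ^ 2 + sinh z ^ 2)) ^ 2) := by
  have hrhs : sinh z * cosh z / (c ^ 2 + sinh z ^ 2) /
      ((c * s / (c ^ 2 + sinh z ^ 2)) ^ 2 + (sinh z * cosh z / (c ^ 2 + sinh z ^ 2)) ^ 2) =
      sinh z * cosh z * (c ^ 2 + sinh z ^ 2) / ((c * s) ^ 2 + (sinh z * cosh z) ^ 2) := by
    field_simp
  have htanh : Real.tanh z =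
      sinh z * cosh z * (c ^ 2 + sinh z ^ 2) / (cosh z ^ 2 * (c ^ 2 + sinh z ^ 2)) := by
    rw [Real.tanh_eq_sinh_div_cosh]
    field_simp
  -- `cosh² z (c² + sinh² z) - (c s)² - (sinh z cosh z)² = c² (cosh² z - s²) ≥ 0`
  have hs1 : s ^ 2 ≤ cosh z ^ 2 := by nlinarith [Real.cosh_sq z, sq_nonneg (sinh z)]
  rw [hrhs, htanh]
  gcongr
  nlinarith [mul_le_mul_of_nonneg_left hs1 (sq_nonneg c)]

end Hyperbolic

section T0

variable (X Y : ℝ) {z : ℝ}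

/-- At the origin the general formula also gives `T0 0 0 z`, because `0 / 0 = 0` and `cos 0 = 1`. -/
lemma T0_eq :
    T0 X Y z =
      mk3 (X * (cos (Mxy X Y) * sin (Mxy X Y)) /
            (√(X ^ 2 + Y ^ 2) * (cos (Mxy X Y) ^ 2 + sinh z ^ 2)))
          (Y * (cos (Mxy X Y) * sin (Mxy X Y)) /
            (√(X ^ 2 + Y ^ 2) * (cos (Mxy X Y) ^ 2 + sinh z ^ 2)))
          (sinh z * cosh z / (cos (Mxy X Y) ^ 2 + sinh z ^ 2)) := by
  unfold T0
  split_ifs with h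
  · obtain ⟨rfl, rfl⟩ := h
    simp [Mxy, tanh_eq_sinh_mul_cosh_div]
  · simp only [mul_assoc]

lemma tanh_le_T0_two (hz : 0 < z) : Real.tanh z ≤ T0 X Y z 2 := by
  rw [T0_eq]
  exact tanh_le_sinh_mul_cosh_div hz (cos_sq_le_one _)

lemma T0_ne_zero (hz : 0 < z) : T0 X Y z ≠ 0 := fun h ↦ by
  have := (tanh_pos_of_pos_s10 hz).trans_le (tanh_le_T0_two X Y hz)
  simp [h] at this

lemma tanh_le_T0_two_div_sq_norm (hz : 0 < z) :
    Real.tanh z ≤ T0 X Y z 2 / ‖T0 X Y z‖ ^ 2 := by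
  refine (tanh_le_sinh_mul_cosh_div_sq_add_sq hz (sin_sq_add_cos_sq (Mxy X Y))).trans ?_
  have hw : 0 < ‖T0 X Y z‖ := norm_pos_iff.2 (T0_ne_zero X Y hz)
  have hw2 : 0 < T0 X Y z 2 := (tanh_pos_of_pos_s10 hz).trans_le (tanh_le_T0_two X Y hz)
  rw [T0_eq] at hw hw2 ⊢
  exact div_le_div_of_nonneg_left hw2.le (by positivity) (sq_norm_mk3_div_le ..)

end T0

lemma exists_Tmap_eq_coe_tanh_le (x y : ℝ) {z : ℝ} (hz : 0 < z) :
    ∃ u : R3, Tmap (mk3 x y z) = ↑u ∧ Real.tanh z ≤ u 2 := by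
  have hcoords : (mk3 x y z 0, mk3 x y z 1, mk3 x y z 2) = (x, y, z) := rfl
  simp only [Prod.mk.injEq] at hcoords
  obtain ⟨h0, h1, h2⟩ := hcoords
  by_cases hev : Even (jfold x + jfold y)
  · exact ⟨_, by simp only [Tmap, h0, h1, h2, if_pos hev], tanh_le_T0_two (fold x) (fold y) hz⟩
  · refine ⟨(‖T0 (fold x) (fold y) z‖ ^ 2)⁻¹ • T0 (fold x) (fold y) z,
      by simp only [Tmap, h0, h1, h2, if_neg hev, if_neg (T0_ne_zero _ _ hz)], ?_⟩
    rw [PiLp.smul_apply, smul_eq_mul, inv_mul_eq_div]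
    exact tanh_le_T0_two_div_sq_norm _ _ hz

/-- for every λ > 0 and every (x,y,z) with z > 0, T_λ(x,y,z) is a finite
point of ℝ³ whose third coordinate is at least λ·tanh z. -/
theorem statement10 (l x y z : ℝ) (hl : 0 < l) (hz : 0 < z) :
    ∃ w : R3, Tl l (mk3 x y z) = ↑w ∧ l * Real.tanh z ≤ w 2 := by
  obtain ⟨u, hu, hu2⟩ := exists_Tmap_eq_coe_tanh_le x y hz
  refine ⟨l • u, by simp only [Tl, hu]; rfl, ?_⟩
  rw [PiLp.smul_apply, smul_eq_mul]
  exact mul_le_mul_of_nonneg_left hu2 hl.le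
end
end

section
/- If 0<λ≤1, then there exists ε>0 such that the set V = {(x,y,z)∈ℝ³ : max(|x|,|y|) < z/2 < ε} is contained in the basin of attraction A((0,0,0)) of the fixed point (0,0,0) of T_λ. -/
noncomputable section

open Real Filter Topology Set MeasureTheory
open scoped Classical OnePoint

/-! Near the positive `z`-axis, in the cone `max(|x|,|y|) < z/2`, `z < 1/4`, no folding occurs and
`T_λ = λ T₀`. With `M = max(|x|,|y|)` and `D = cos² M + sinh² z`, the horizontal coordinates of
`T₀` are at most `|cos M sin M| / D ≤ M / D < z / (2D)`, and its height `sinh z cosh z / D` lies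
between `z / D` and `z - z³/24` by Taylor bounds on `sinh` and `cos`. So for `0 < λ ≤ 1` the map
`λ T₀` keeps the cone invariant and lowers heights at least like `z ↦ z - z³/24`, which forces
them to `0`; since `‖v‖ ≤ 2z` on the cone, the orbit converges to the origin. -/

lemma Real.sinh_le_of_nonneg_of_le_one {t : ℝ} (h0 : 0 ≤ t) (h1 : t ≤ 1) :
    Real.sinh t ≤ t + t ^ 3 / 6 + t ^ 5 / 100 := by
  have hpos := Real.exp_bound (x := t) (by rwa [abs_of_nonneg h0]) (n := 5) (by norm_num)
  have hneg := Real.exp_bound (x := -t) (by rwa [abs_neg, abs_of_nonneg h0]) (n := 5) (by norm_num)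
  rw [abs_le] at hpos hneg
  simp only [Finset.sum_range_succ, Finset.sum_range_zero, abs_neg, abs_of_nonneg h0] at hpos hneg
  norm_num [Nat.factorial] at hpos hneg
  rw [Real.sinh_eq]
  nlinarith [hpos.1, hneg.2]

lemma sinh_mul_cosh_le {M z : ℝ} (hM : 0 ≤ M) (hMz : 2 * M < z) (hz : z ≤ 1 / 4) :
    Real.sinh z * Real.cosh z ≤ (z - z ^ 3 / 24) * (Real.cos M ^ 2 + Real.sinh z ^ 2) := by
  have hz0 : 0 < z := by linarith
  have hsinh2 : Real.sinh (2 * z) ≤ 2 * z + (2 * z) ^ 3 / 6 + (2 * z) ^ 5 / 100 :=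
    Real.sinh_le_of_nonneg_of_le_one (by linarith) (by linarith)
  rw [Real.sinh_two_mul] at hsinh2
  have hcos : 1 - M ^ 2 / 2 ≤ Real.cos M := Real.one_sub_sq_div_two_le_cos
  have hsinh : z ≤ Real.sinh z := Real.self_le_sinh_iff.2 hz0.le
  have hden : 1 + 3 / 4 * z ^ 2 ≤ Real.cos M ^ 2 + Real.sinh z ^ 2 := by
    nlinarith [mul_self_le_mul_self (by nlinarith : (0 : ℝ) ≤ 1 - M ^ 2 / 2) hcos]
  have hz5 : z ^ 5 ≤ z ^ 3 / 16 := by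
    have : z ^ 2 ≤ 1 / 16 := by nlinarith
    nlinarith [pow_pos hz0 3]
  calc Real.sinh z * Real.cosh z ≤ z + 2 / 3 * z ^ 3 + 4 / 25 * z ^ 5 := by nlinarith
    _ ≤ (z - z ^ 3 / 24) * (1 + 3 / 4 * z ^ 2) := by nlinarith [pow_pos hz0 3]
    _ ≤ (z - z ^ 3 / 24) * (Real.cos M ^ 2 + Real.sinh z ^ 2) :=
        mul_le_mul_of_nonneg_left hden (by nlinarith)

lemma tendsto_zero_of_le_sub_mul_pow {u : ℕ → ℝ} {c : ℝ} {p : ℕ} (hc : 0 < c)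
    (hu0 : ∀ n, 0 ≤ u n) (hu : ∀ n, u (n + 1) ≤ u n - c * u n ^ p) :
    Tendsto u atTop (𝓝 0) := by
  have hanti : Antitone u := antitone_nat_of_succ_le fun n => by
    nlinarith [hu n, pow_nonneg (hu0 n) p]
  have hlim := tendsto_atTop_ciInf hanti ⟨0, by rintro _ ⟨n, rfl⟩; exact hu0 n⟩
  set L := ⨅ n, u n
  have hL0 : 0 ≤ L := le_ciInf hu0
  have hstep : L ≤ L - c * L ^ p :=
    le_of_tendsto_of_tendsto' (hlim.comp (tendsto_add_atTop_nat 1))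
      (hlim.sub ((hlim.pow p).const_mul c)) fun n => hu n
  have hLp : L ^ p = 0 := le_antisymm (by nlinarith) (pow_nonneg hL0 p)
  rwa [eq_zero_of_pow_eq_zero hLp] at hlim

lemma abs_cos_mul_sin_le (x : ℝ) : |Real.cos x * Real.sin x| ≤ |x| := by
  have h : Real.cos x * Real.sin x = Real.sin (2 * x) / 2 := by rw [Real.sin_two_mul]; ring
  rw [h, abs_div, abs_two, div_le_iff₀ two_pos]
  exact Real.abs_sin_le_abs.trans_eq (by rw [abs_mul, abs_two]; ring)

lemma abs_mul_div_mul_le {u r a d : ℝ} (hu : |u| ≤ r) : |u * a / (r * d)| ≤ |a / d| := by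
  obtain hr | hr := ((abs_nonneg u).trans hu).eq_or_lt
  · simp [← hr]
  · rw [mul_div_mul_comm, abs_mul]
    exact mul_le_of_le_one_left (abs_nonneg _)
      (by rw [abs_div, abs_of_pos hr]; exact div_le_one_of_le₀ hu hr.le)

lemma max_abs_T0_le (x y z : ℝ) :
    max |T0 x y z 0| |T0 x y z 1| ≤ Mxy x y / (Real.cos (Mxy x y) ^ 2 + Real.sinh z ^ 2) := by
  have hM : 0 ≤ Mxy x y := (abs_nonneg x).trans (le_max_left _ _)
  have hbound : ∀ u, |u| ≤ √(x ^ 2 + y ^ 2) →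
      |u * Real.cos (Mxy x y) * Real.sin (Mxy x y) /
        (√(x ^ 2 + y ^ 2) * (Real.cos (Mxy x y) ^ 2 + Real.sinh z ^ 2))|
      ≤ Mxy x y / (Real.cos (Mxy x y) ^ 2 + Real.sinh z ^ 2) := fun u hu => by
    rw [mul_assoc]
    refine (abs_mul_div_mul_le hu).trans ?_
    rw [abs_div, abs_of_nonneg (by positivity : 0 ≤ Real.cos (Mxy x y) ^ 2 + Real.sinh z ^ 2)]
    exact div_le_div_of_nonneg_right ((abs_cos_mul_sin_le _).trans_eq (abs_of_nonneg hM))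
      (by positivity)
  unfold T0
  split_ifs
  · simpa [mk3] using div_nonneg hM (by positivity)
  · exact max_le (hbound x (Real.abs_le_sqrt (by nlinarith)))
      (hbound y (Real.abs_le_sqrt (by nlinarith)))

lemma T0_two (x y z : ℝ) :
    T0 x y z 2 = Real.sinh z * Real.cosh z / (Real.cos (Mxy x y) ^ 2 + Real.sinh z ^ 2) := by
  unfold T0
  split_ifs with h
  · obtain ⟨rfl, rfl⟩ := h
    have hcosh := Real.cosh_pos z
    simp only [mk3, Mxy, abs_zero, max_self, Real.cos_zero, one_pow, Real.tanh_eq_sinh_div_cosh]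
    rw [add_comm, ← Real.cosh_sq]
    change Real.sinh z / Real.cosh z = _
    field_simp
  · rfl

lemma T0_cone_bounds {x y z : ℝ} (hM : max |x| |y| < z / 2) (hz : z ≤ 1 / 4) :
    max |T0 x y z 0| |T0 x y z 1| < T0 x y z 2 / 2 ∧ 0 < T0 x y z 2 ∧
      T0 x y z 2 ≤ z - z ^ 3 / 24 := by
  have hM0 : 0 ≤ max |x| |y| := (abs_nonneg x).trans (le_max_left _ _)
  have hz0 : 0 < z := by linarith
  have hD : 0 < Real.cos (Mxy x y) ^ 2 + Real.sinh z ^ 2 := by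
    have := Real.sinh_pos_iff.2 hz0
    positivity
  have hsc : z ≤ Real.sinh z * Real.cosh z :=
    (Real.self_le_sinh_iff.2 hz0.le).trans
      (le_mul_of_one_le_right (Real.sinh_nonneg_iff.2 hz0.le) (Real.one_le_cosh z))
  rw [T0_two]
  refine ⟨(max_abs_T0_le x y z).trans_lt ?_, div_pos (by linarith) hD,
    (div_le_iff₀ hD).2 (sinh_mul_cosh_le hM0 (by rw [Mxy]; linarith) hz)⟩
  rw [div_right_comm, div_lt_div_iff_of_pos_right hD]
  change max |x| |y| < _
  linarith

lemma jfold_eq_zero {t : ℝ} (h : |t| < π / 4) : jfold t = 0 := by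
  rw [abs_lt] at h
  rw [jfold, Int.floor_eq_zero_iff, Set.mem_Ico, le_div_iff₀ (by positivity),
    div_lt_one (by positivity)]
  constructor <;> linarith

lemma fold_eq_self {t : ℝ} (h : |t| < π / 4) : fold t = t := by
  simp [fold, jfold_eq_zero h]

def cone : Set R3 := {v | max |v 0| |v 1| < v 2 / 2 ∧ v 2 < 1 / 4}

def scaledT0 (l : ℝ) (v : R3) : R3 := l • T0 (v 0) (v 1) (v 2)

lemma pos_of_mem_cone {v : R3} (hv : v ∈ cone) : 0 < v 2 := by
  linarith [hv.1, (abs_nonneg (v 0)).trans (le_max_left _ |v 1|)]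

lemma mapsTo_scaledT0_cone {l : ℝ} (h0 : 0 < l) (h1 : l ≤ 1) : MapsTo (scaledT0 l) cone cone := by
  rintro v ⟨hM, hz⟩
  obtain ⟨hM', hpos, hle⟩ := T0_cone_bounds hM hz.le
  simp only [cone, scaledT0, mem_ofPred_eq, PiLp.smul_apply, smul_eq_mul, abs_mul, abs_of_pos h0,
    ← mul_max_of_nonneg _ _ h0.le]
  constructor
  · nlinarith
  · nlinarith [mul_le_of_le_one_left hpos.le h1, pow_pos (pos_of_mem_cone ⟨hM, hz⟩) 3]

lemma scaledT0_two_le {l : ℝ} (h1 : l ≤ 1) {v : R3} (hv : v ∈ cone) :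
    scaledT0 l v 2 ≤ v 2 - v 2 ^ 3 / 24 := by
  obtain ⟨-, hpos, hle⟩ := T0_cone_bounds hv.1 hv.2.le
  simp only [scaledT0, PiLp.smul_apply, smul_eq_mul]
  nlinarith

lemma abs_le_of_mem_cone {v : R3} (hv : v ∈ cone) : |v 0| ≤ v 2 ∧ |v 1| ≤ v 2 := by
  have := pos_of_mem_cone hv
  constructor <;> linarith [hv.1, le_max_left |v 0| |v 1|, le_max_right |v 0| |v 1|]

lemma norm_le_two_mul_of_mem_cone {v : R3} (hv : v ∈ cone) : ‖v‖ ≤ 2 * v 2 := by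
  obtain ⟨h0, h1⟩ := abs_le_of_mem_cone hv
  rw [EuclideanSpace.norm_eq, Real.sqrt_le_iff, Fin.sum_univ_three]
  simp only [Real.norm_eq_abs, sq_abs]
  refine ⟨by linarith [pos_of_mem_cone hv], ?_⟩
  nlinarith [sq_le_sq' (abs_le.1 h0).1 (abs_le.1 h0).2, sq_le_sq' (abs_le.1 h1).1 (abs_le.1 h1).2]

lemma Tl_eq_scaledT0 (l : ℝ) {v : R3} (hv : v ∈ cone) : Tl l v = ↑(scaledT0 l v) := by
  have hpi : v 2 < π / 4 := by linarith [hv.2, Real.pi_gt_three]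
  have h0 : |v 0| < π / 4 := by linarith [(abs_le_of_mem_cone hv).1]
  have h1 : |v 1| < π / 4 := by linarith [(abs_le_of_mem_cone hv).2]
  simp only [Tl, Tmap, scaledT0, jfold_eq_zero, fold_eq_self, h0, h1, add_zero, Even.zero,
    ↓reduceIte]
  rfl

lemma TlHat_iterate_of_mem_cone {l : ℝ} (h0 : 0 < l) (h1 : l ≤ 1) {v : R3} (hv : v ∈ cone)
    (k : ℕ) : (TlHat l)^[k] ↑v = ↑((scaledT0 l)^[k] v) := by
  induction k with
  | zero => rfl
  | succ k ih =>
    rw [Function.iterate_succ_apply', Function.iterate_succ_apply', ih]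
    exact Tl_eq_scaledT0 l ((mapsTo_scaledT0_cone h0 h1).iterate k hv)

lemma mk3_zero : mk3 0 0 0 = 0 := by
  ext i
  fin_cases i <;> rfl

/-- for 0 < λ ≤ 1 there exists ε > 0 such that the set
V = {(x,y,z) : max(|x|,|y|) < z/2 < ε} is contained in the basin of the origin. -/
theorem statement11 (l : ℝ) (h0 : 0 < l) (h1 : l ≤ 1) :
    ∃ ε > (0 : ℝ), {v : R3 | max |v 0| |v 1| < v 2 / 2 ∧ v 2 / 2 < ε} ⊆
      basin l (mk3 0 0 0) := by
  refine ⟨1 / 8, by norm_num, fun v ⟨hM, hz⟩ => ?_⟩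
  have hv : v ∈ cone := ⟨hM, by linarith⟩
  have horbit := TlHat_iterate_of_mem_cone h0 h1 hv
  have hcone := fun k => (mapsTo_scaledT0_cone h0 h1).iterate k hv
  have hheight : Tendsto (fun k => (scaledT0 l)^[k] v 2) atTop (𝓝 0) :=
    tendsto_zero_of_le_sub_mul_pow (c := 1 / 24) (p := 3) (by norm_num)
      (fun k => (pos_of_mem_cone (hcone k)).le) fun k => by
        rw [Function.iterate_succ_apply']
        linarith [scaledT0_two_le h1 (hcone k)]
  refine ⟨fun k => horbit k ▸ OnePoint.coe_ne_infty _, fun ε hε => ?_⟩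
  obtain ⟨N, hN⟩ := eventually_atTop.1 ((tendsto_order.1 hheight).2 (ε / 2) (by positivity))
  refine ⟨N, fun k hk w hw => ?_⟩
  rw [horbit k, OnePoint.coe_eq_coe] at hw
  rw [← hw, mk3_zero, sub_zero]
  linarith [norm_le_two_mul_of_mem_cone (hcone k), hN k hk]
end
end
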